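/- Let T and C be independent real-valued random variables, Y = min(T, C), and τ ∈ (0,1). Assume the cumulative distribution function q ↦ P(C ≤ q) is strictly increasing on ℝ. If q* ∈ ℝ satisfies S(q*) = 0, where S(q) = (1−τ)·P(C > q) − P(Y > q), then P(T ≤ q*) = τ. -/
import Mathlib


open MeasureTheory ProbabilityTheory Set

/-- Identification. For independent `T` and `C` with `Y = min(T,C)` and
`τ ∈ (0,1)`, if the CDF of `C` is strictly increasing on `ℝ` and `q*` is a root of
`S(q) = (1−τ)·P(C > q) − P(Y > q)`, then `P(T ≤ q*) = τ`. -/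
theorem root_identifies_true_quantile
    {Ω : Type*} [MeasurableSpace Ω] (μ : Measure Ω) [IsProbabilityMeasure μ]
    (T C Y : Ω → ℝ) (hT : Measurable T) (hC : Measurable C)
    (hindep : IndepFun T C μ)
    (hY : ∀ ω, Y ω = min (T ω) (C ω))
    (τ : ℝ) (hτ : τ ∈ Set.Ioo (0 : ℝ) 1)
    (hCmono : StrictMono fun q : ℝ => (μ {ω | C ω ≤ q}).toReal)
    (S : ℝ → ℝ)
    (hS : ∀ q, S q = (1 - τ) * (μ {ω | q < C ω}).toReal - (μ {ω | q < Y ω}).toReal)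
    (qstar : ℝ) (hroot : S qstar = 0) :
    (μ {ω | T ω ≤ qstar}).toReal = τ := by
  -- P(Y > q) = P(T > q) * P(C > q)
  have hYset : {ω | qstar < Y ω} = T ⁻¹' (Ioi qstar) ∩ C ⁻¹' (Ioi qstar) := by
    ext ω; simp [hY ω, lt_min_iff, Set.mem_preimage]
  have hmul : μ {ω | qstar < Y ω} = μ (T ⁻¹' (Ioi qstar)) * μ (C ⁻¹' (Ioi qstar)) := by
    rw [hYset]
    exact hindep.measure_inter_preimage_eq_mul _ _ measurableSet_Ioi measurableSet_Ioi
  -- P(C > qstar) > 0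
  have hfin : ∀ (s : Set Ω), μ s ≠ ⊤ := fun s => measure_ne_top μ s
  have hCle : μ {ω | C ω ≤ qstar} < 1 := by
    by_contra hle
    push_neg at hle
    have heq1 : μ {ω | C ω ≤ qstar} = 1 := le_antisymm prob_le_one hle
    have h := hCmono (lt_add_one qstar)
    simp only [heq1] at h
    have h1 : (μ {ω | C ω ≤ qstar + 1}).toReal ≤ 1 := by
      have := prob_le_one (μ := μ) (s := {ω | C ω ≤ qstar + 1})
      calc (μ {ω | C ω ≤ qstar + 1}).toReal ≤ (1:ENNReal).toReal :=
            ENNReal.toReal_mono (by simp) this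
        _ = 1 := by simp
    simp only [ENNReal.toReal_one] at h
    linarith
  have hCgt : (0:ℝ) < (μ {ω | qstar < C ω}).toReal := by
    have hc : {ω | qstar < C ω} = {ω | C ω ≤ qstar}ᶜ := by
      ext ω; simp [not_le]
    have : μ {ω | qstar < C ω} = 1 - μ {ω | C ω ≤ qstar} := by
      rw [hc, measure_compl (measurableSet_le hC measurable_const) (hfin _), measure_univ]
    rw [this]
    have : (0 : ENNReal) < 1 - μ {ω | C ω ≤ qstar} := tsub_pos_of_lt hCle
    exact ENNReal.toReal_pos this.ne' (by finiteness)
  -- from root: (1-τ) * P(C>q) = P(T>q) * P(C>q)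
  have heq : (1 - τ) * (μ {ω | qstar < C ω}).toReal
      = (μ {ω | qstar < T ω}).toReal * (μ {ω | qstar < C ω}).toReal := by
    have h0 := hroot
    rw [hS] at h0
    have hmul' : (μ {ω | qstar < Y ω}).toReal
        = (μ {ω | qstar < T ω}).toReal * (μ {ω | qstar < C ω}).toReal := by
      rw [hmul, ENNReal.toReal_mul]; rfl
    linarith [hmul']
  have hTgt : (μ {ω | qstar < T ω}).toReal = 1 - τ :=
    (mul_right_cancel₀ hCgt.ne' heq.symm)
  have hcompl : {ω | T ω ≤ qstar} = {ω | qstar < T ω}ᶜ := by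
    ext ω; simp [not_lt]
  have : μ {ω | T ω ≤ qstar} = 1 - μ {ω | qstar < T ω} := by
    rw [hcompl, measure_compl (measurableSet_lt measurable_const hT) (hfin _), measure_univ]
  rw [this, ENNReal.toReal_sub_of_le (prob_le_one) (by simp)]
  simp [hTgt]
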